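/- arXiv:math/0407409 — 3 statements merged into one kernel-verified Lean document; each statement's English description precedes it below -/
import Mathlib

section
/- Noether invariance principle for constrained optimal control (Theorem 2): Let (x(·), u(·), ψ₀, ψ(·), λ(·)) be a Pontryagin extremal of the constrained optimal control problem on [a,b]. Suppose there exists ε > 0 and a C²-smooth one-parameter family of maps hˢ(t,x,u) = (T(t,x,u,s), X(t,x,u,s), U(t,x,u,s)), for s ∈ (−ε,ε), with h⁰(t,x,u) = (t,x,u) for all (t,x,u), such that along the extremal and for all s ∈ (−ε,ε): (i) L(t,x(t),u(t)) = L(hˢ(t,x(t),u(t))) · (d/dt) T(t,x(t),u(t),s); (ii) (d/dt) X(t,x(t),u(t),s) = φ(hˢ(t,x(t),u(t))) · (d/dt) T(t,x(t),u(t),s); (iii) ϕ(t,x(t),u(t)) = ϕ(hˢ(t,x(t),u(t))) · (d/dt) T(t,x(t),u(t),s). Then the function t ↦ ⟨ψ(t), ∂X/∂s(t,x(t),u(t),0)⟩ − H(t,x(t),u(t),ψ₀,ψ(t),λ(t)) · ∂T/∂s(t,x(t),u(t),0) is constant on [a,b]. -/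
open Set RealInnerProductSpace

/-- The Hamiltonian of the constrained optimal control problem:
`H(t,x,u,ψ₀,ψ,λ) = ψ₀·L(t,x,u) + ⟨ψ, φ(t,x,u)⟩ + ⟨λ, ϕ(t,x,u)⟩`. -/
noncomputable def Ham {n r m : ℕ}
    (L : ℝ × EuclideanSpace ℝ (Fin n) × EuclideanSpace ℝ (Fin r) → ℝ)
    (φ : ℝ × EuclideanSpace ℝ (Fin n) × EuclideanSpace ℝ (Fin r) → EuclideanSpace ℝ (Fin n))
    (ϕ : ℝ × EuclideanSpace ℝ (Fin n) × EuclideanSpace ℝ (Fin r) → EuclideanSpace ℝ (Fin m))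
    (t : ℝ) (x : EuclideanSpace ℝ (Fin n)) (u : EuclideanSpace ℝ (Fin r))
    (ψ₀ : ℝ) (ψ : EuclideanSpace ℝ (Fin n)) (lam : EuclideanSpace ℝ (Fin m)) : ℝ :=
  ψ₀ * L (t, x, u) + ⟪ψ, φ (t, x, u)⟫ + ⟪lam, ϕ (t, x, u)⟫

/-- A Pontryagin extremal of the constrained optimal control problem on `[a,b]`:
`x, u, ψ, λ` differentiable, `ẋ = φ`, adjoint system `ψ̇ = −∂H/∂x`,
stationarity `∂H/∂u = 0`, and `dH/dt = ∂H/∂t`. -/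
noncomputable def IsPontryaginExtremal {n r m : ℕ}
    (L : ℝ × EuclideanSpace ℝ (Fin n) × EuclideanSpace ℝ (Fin r) → ℝ)
    (φ : ℝ × EuclideanSpace ℝ (Fin n) × EuclideanSpace ℝ (Fin r) → EuclideanSpace ℝ (Fin n))
    (ϕ : ℝ × EuclideanSpace ℝ (Fin n) × EuclideanSpace ℝ (Fin r) → EuclideanSpace ℝ (Fin m))
    (a b : ℝ)
    (x : ℝ → EuclideanSpace ℝ (Fin n)) (u : ℝ → EuclideanSpace ℝ (Fin r))
    (ψ₀ : ℝ) (ψ : ℝ → EuclideanSpace ℝ (Fin n)) (lam : ℝ → EuclideanSpace ℝ (Fin m)) : Prop :=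
  (∀ t ∈ Icc a b, DifferentiableAt ℝ x t ∧ DifferentiableAt ℝ u t ∧
      DifferentiableAt ℝ ψ t ∧ DifferentiableAt ℝ lam t) ∧
  -- control system ẋ(t) = ∂H/∂ψ = φ(t, x(t), u(t))
  (∀ t ∈ Icc a b, deriv x t = φ (t, x t, u t)) ∧
  -- adjoint system ψ̇(t) = −∂H/∂x(t, x(t), u(t), ψ₀, ψ(t), λ(t))
  (∀ t ∈ Icc a b, ∀ v : EuclideanSpace ℝ (Fin n),
      ⟪deriv ψ t, v⟫ =
        -(ψ₀ * fderiv ℝ L (t, x t, u t) (0, v, 0)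
          + ⟪ψ t, fderiv ℝ φ (t, x t, u t) (0, v, 0)⟫
          + ⟪lam t, fderiv ℝ ϕ (t, x t, u t) (0, v, 0)⟫)) ∧
  -- stationarity ∂H/∂u(t, x(t), u(t), ψ₀, ψ(t), λ(t)) = 0
  (∀ t ∈ Icc a b, ∀ v : EuclideanSpace ℝ (Fin r),
      ψ₀ * fderiv ℝ L (t, x t, u t) (0, 0, v)
        + ⟪ψ t, fderiv ℝ φ (t, x t, u t) (0, 0, v)⟫
        + ⟪lam t, fderiv ℝ ϕ (t, x t, u t) (0, 0, v)⟫ = 0) ∧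
  -- dH/dt = ∂H/∂t along the extremal
  (∀ t ∈ Icc a b,
      deriv (fun τ => Ham L φ ϕ τ (x τ) (u τ) ψ₀ (ψ τ) (lam τ)) t =
        ψ₀ * fderiv ℝ L (t, x t, u t) (1, 0, 0)
          + ⟪ψ t, fderiv ℝ φ (t, x t, u t) (1, 0, 0)⟫
          + ⟪lam t, fderiv ℝ ϕ (t, x t, u t) (1, 0, 0)⟫)

/-!
Differentiate the three invariance identities with respect to `s` at `s = 0`, where `hˢ` is the
identity and `d T / d t = 1`. Writing `(θ, ξ, υ)` for the generator `∂hˢ/∂s|₀` along the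
extremal, the symmetry of second derivatives of `T` and `X` turns the `s`-derivatives of
`dT/dt` and `dX/dt` into `θ̇` and `ξ̇`, and one gets
`ξ̇ = φ'·(θ, ξ, υ) + θ̇ φ`, `L'·(θ, ξ, υ) + θ̇ L = 0` and `ϕ'·(θ, ξ, υ) + θ̇ ϕ = 0`.
Pairing these with `ψ₀`, `ψ` and `λ` gives `⟨ψ, ξ̇⟩ = ∂H·(θ, ξ, υ) + θ̇ H`, and the adjoint
equation, the stationarity condition and `dH/dt = ∂H/∂t` make the derivative of
`⟨ψ, ξ⟩ − H θ` equal to `∂H/∂u · υ = 0`.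
-/

open Filter Topology

section MixedPartials

variable {E F : Type*} [NormedAddCommGroup E] [NormedSpace ℝ E]
  [NormedAddCommGroup F] [NormedSpace ℝ F] {G : E × ℝ → F} {p : ℝ → E} {p' : E} {t : ℝ}

theorem hasDerivAt_comp_prodMk_const {s : ℝ} (hG : DifferentiableAt ℝ G (p t, s))
    (hp : HasDerivAt p p' t) :
    HasDerivAt (fun τ => G (p τ, s)) (fderiv ℝ G (p t, s) (p', 0)) t :=
  hG.hasFDerivAt.comp_hasDerivAt t (hp.prodMk (hasDerivAt_const t s))

theorem hasDerivAt_comp_const_prodMk {q : E} {s : ℝ} (hG : DifferentiableAt ℝ G (q, s)) :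
    HasDerivAt (fun s => G (q, s)) (fderiv ℝ G (q, s) (0, 1)) s :=
  hG.hasFDerivAt.comp_hasDerivAt s ((hasDerivAt_const s q).prodMk (hasDerivAt_id s))

theorem ContDiff.hasDerivAt_deriv_param (hG : ContDiff ℝ 2 G) (hp : HasDerivAt p p' t)
    (s₀ : ℝ) :
    HasDerivAt (fun τ => deriv (fun s => G (p τ, s)) s₀)
      (fderiv ℝ (fderiv ℝ G) (p t, s₀) (p', 0) (0, 1)) t := by
  have hG' : Differentiable ℝ (fderiv ℝ G) := (hG.fderiv_right le_rfl).differentiable one_ne_zero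
  have hderiv : (fun τ => deriv (fun s => G (p τ, s)) s₀) =
      fun τ => fderiv ℝ G (p τ, s₀) (0, 1) :=
    funext fun τ => (hasDerivAt_comp_const_prodMk (hG.differentiable two_ne_zero _)).deriv
  rw [hderiv]
  exact ((hasDerivAt_comp_prodMk_const (hG' _) hp).clm_apply (hasDerivAt_const t _)).congr_deriv
    (by simp)

/-- Mixed partials commute: the value is the same as in `ContDiff.hasDerivAt_deriv_param`. -/
theorem ContDiff.hasDerivAt_param_deriv (hG : ContDiff ℝ 2 G) (hp : HasDerivAt p p' t)
    (s₀ : ℝ) :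
    HasDerivAt (fun s => deriv (fun τ => G (p τ, s)) t)
      (fderiv ℝ (fderiv ℝ G) (p t, s₀) (p', 0) (0, 1)) s₀ := by
  have hG' : Differentiable ℝ (fderiv ℝ G) := (hG.fderiv_right le_rfl).differentiable one_ne_zero
  have hderiv : (fun s => deriv (fun τ => G (p τ, s)) t) =
      fun s => fderiv ℝ G (p t, s) (p', 0) :=
    funext fun s => (hasDerivAt_comp_prodMk_const (hG.differentiable two_ne_zero _) hp).deriv
  rw [hderiv, (hG.contDiffAt.isSymmSndFDerivAt (by simp)) (p', 0) (0, 1)]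
  exact ((hasDerivAt_comp_const_prodMk (hG' _)).clm_apply (hasDerivAt_const s₀ _)).congr_deriv
    (by simp)

end MixedPartials

theorem eq_fderiv_add_smul_of_eventuallyEq_smul {E V : Type*} [NormedAddCommGroup E]
    [NormedSpace ℝ E] [NormedAddCommGroup V] [NormedSpace ℝ V] {F : E → V} {γ : ℝ → E}
    {c : ℝ → ℝ} {g : ℝ → V} {q v : E} {c' s₀ : ℝ} {g' : V}
    (hF : DifferentiableAt ℝ F q) (hγ : HasDerivAt γ v s₀) (hγ₀ : γ s₀ = q)
    (hc : HasDerivAt c c' s₀) (hc₀ : c s₀ = 1) (hg : HasDerivAt g g' s₀)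
    (heq : g =ᶠ[𝓝 s₀] fun s => c s • F (γ s)) :
    g' = fderiv ℝ F q v + c' • F q := by
  subst hγ₀
  have hprod := hc.smul (hF.hasFDerivAt.comp_hasDerivAt s₀ hγ)
  rw [hc₀, one_smul] at hprod
  exact hg.unique (hprod.congr_of_eventuallyEq heq)

theorem exists_forall_eq_of_hasDerivAt_zero {E : Type*} [NormedAddCommGroup E]
    [NormedSpace ℝ E] {f : ℝ → E} {a b : ℝ} (hf : ∀ t ∈ Icc a b, HasDerivAt f 0 t) :
    ∃ C, ∀ t ∈ Icc a b, f t = C :=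
  ⟨f a, constant_of_has_deriv_right_zero
    (fun t ht => (hf t ht).continuousAt.continuousWithinAt)
    (fun t ht => (hf t (Ico_subset_Icc_self ht)).hasDerivWithinAt)⟩

section Hamiltonian

variable {n r m : ℕ}

noncomputable def hamDeriv
    (L : ℝ × EuclideanSpace ℝ (Fin n) × EuclideanSpace ℝ (Fin r) → ℝ)
    (φ : ℝ × EuclideanSpace ℝ (Fin n) × EuclideanSpace ℝ (Fin r) → EuclideanSpace ℝ (Fin n))
    (ϕ : ℝ × EuclideanSpace ℝ (Fin n) × EuclideanSpace ℝ (Fin r) → EuclideanSpace ℝ (Fin m))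
    (q : ℝ × EuclideanSpace ℝ (Fin n) × EuclideanSpace ℝ (Fin r))
    (ψ₀ : ℝ) (ψ : EuclideanSpace ℝ (Fin n)) (lam : EuclideanSpace ℝ (Fin m)) :
    (ℝ × EuclideanSpace ℝ (Fin n) × EuclideanSpace ℝ (Fin r)) →L[ℝ] ℝ :=
  ψ₀ • fderiv ℝ L q + (innerSL ℝ ψ).comp (fderiv ℝ φ q) + (innerSL ℝ lam).comp (fderiv ℝ ϕ q)

variable {L : ℝ × EuclideanSpace ℝ (Fin n) × EuclideanSpace ℝ (Fin r) → ℝ}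
  {φ : ℝ × EuclideanSpace ℝ (Fin n) × EuclideanSpace ℝ (Fin r) → EuclideanSpace ℝ (Fin n)}
  {ϕ : ℝ × EuclideanSpace ℝ (Fin n) × EuclideanSpace ℝ (Fin r) → EuclideanSpace ℝ (Fin m)}

theorem hamDeriv_apply (q w : ℝ × EuclideanSpace ℝ (Fin n) × EuclideanSpace ℝ (Fin r))
    (ψ₀ : ℝ) (ψ : EuclideanSpace ℝ (Fin n)) (lam : EuclideanSpace ℝ (Fin m)) :
    hamDeriv L φ ϕ q ψ₀ ψ lam w =
      ψ₀ * fderiv ℝ L q w + ⟪ψ, fderiv ℝ φ q w⟫ + ⟪lam, fderiv ℝ ϕ q w⟫ :=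
  rfl

theorem differentiableAt_ham_comp (hL : Differentiable ℝ L) (hφ : Differentiable ℝ φ)
    (hϕ : Differentiable ℝ ϕ) {x : ℝ → EuclideanSpace ℝ (Fin n)}
    {u : ℝ → EuclideanSpace ℝ (Fin r)} {ψ : ℝ → EuclideanSpace ℝ (Fin n)}
    {lam : ℝ → EuclideanSpace ℝ (Fin m)} {t : ℝ} (ψ₀ : ℝ)
    (hx : DifferentiableAt ℝ x t) (hu : DifferentiableAt ℝ u t)
    (hψ : DifferentiableAt ℝ ψ t) (hlam : DifferentiableAt ℝ lam t) :
    DifferentiableAt ℝ (fun τ => Ham L φ ϕ τ (x τ) (u τ) ψ₀ (ψ τ) (lam τ)) t := by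
  have hq : DifferentiableAt ℝ (fun τ => (τ, x τ, u τ)) t :=
    differentiableAt_id.prodMk (hx.prodMk hu)
  exact ((differentiableAt_const ψ₀).mul ((hL _).comp t hq)).add
    (hψ.inner ℝ ((hφ _).comp t hq)) |>.add (hlam.inner ℝ ((hϕ _).comp t hq))

theorem noether_quantity_deriv_eq_zero {t θ θ' H' : ℝ} {x ψ ψ' ξ ξ' : EuclideanSpace ℝ (Fin n)}
    {u υ : EuclideanSpace ℝ (Fin r)} {ψ₀ : ℝ} {lam : EuclideanSpace ℝ (Fin m)}
    (hL : (0 : ℝ) = fderiv ℝ L (t, x, u) (θ, ξ, υ) + θ' • L (t, x, u))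
    (hφ : ξ' = fderiv ℝ φ (t, x, u) (θ, ξ, υ) + θ' • φ (t, x, u))
    (hϕ : (0 : EuclideanSpace ℝ (Fin m)) = fderiv ℝ ϕ (t, x, u) (θ, ξ, υ) + θ' • ϕ (t, x, u))
    (hadj : ⟪ψ', ξ⟫ = -hamDeriv L φ ϕ (t, x, u) ψ₀ ψ lam (0, ξ, 0))
    (hstat : hamDeriv L φ ϕ (t, x, u) ψ₀ ψ lam (0, 0, υ) = 0)
    (hH' : H' = hamDeriv L φ ϕ (t, x, u) ψ₀ ψ lam (1, 0, 0)) :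
    ⟪ψ, ξ'⟫ + ⟪ψ', ξ⟫ - (H' * θ + Ham L φ ϕ t x u ψ₀ ψ lam * θ') = 0 := by
  set dH := hamDeriv L φ ϕ (t, x, u) ψ₀ ψ lam
  have hsplit : dH (θ, ξ, υ) = θ * dH (1, 0, 0) + dH (0, ξ, 0) + dH (0, 0, υ) := by
    rw [← smul_eq_mul, ← map_smul, ← map_add, ← map_add]
    simp
  have hψξ' : ⟪ψ, ξ'⟫ = dH (θ, ξ, υ) + θ' * Ham L φ ϕ t x u ψ₀ ψ lam := by
    have hlamϕ := congrArg (inner ℝ lam) hϕ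
    simp only [inner_zero_right, inner_add_right, real_inner_smul_right] at hlamϕ
    rw [hφ, hamDeriv_apply, Ham, inner_add_right, real_inner_smul_right]
    rw [smul_eq_mul] at hL
    linear_combination ψ₀ * hL + hlamϕ
  rw [hψξ', hsplit, hadj, hH', hstat]
  ring

end Hamiltonian

theorem noether_invariance_constrained_optimal_control_general
    {n r m : ℕ}
    (L : ℝ × EuclideanSpace ℝ (Fin n) × EuclideanSpace ℝ (Fin r) → ℝ)
    (φ : ℝ × EuclideanSpace ℝ (Fin n) × EuclideanSpace ℝ (Fin r) → EuclideanSpace ℝ (Fin n))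
    (ϕ : ℝ × EuclideanSpace ℝ (Fin n) × EuclideanSpace ℝ (Fin r) → EuclideanSpace ℝ (Fin m))
    (hL : ContDiff ℝ 1 L) (hφ : ContDiff ℝ 1 φ) (hϕ : ContDiff ℝ 1 ϕ)
    (a b : ℝ)
    (x : ℝ → EuclideanSpace ℝ (Fin n)) (u : ℝ → EuclideanSpace ℝ (Fin r))
    (ψ₀ : ℝ) (ψ : ℝ → EuclideanSpace ℝ (Fin n)) (lam : ℝ → EuclideanSpace ℝ (Fin m))
    (hext : IsPontryaginExtremal L φ ϕ a b x u ψ₀ ψ lam)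
    -- the C²-smooth one-parameter family of maps, identity at s = 0
    (ε : ℝ) (hε : 0 < ε)
    (T : (ℝ × EuclideanSpace ℝ (Fin n) × EuclideanSpace ℝ (Fin r)) × ℝ → ℝ)
    (X : (ℝ × EuclideanSpace ℝ (Fin n) × EuclideanSpace ℝ (Fin r)) × ℝ →
        EuclideanSpace ℝ (Fin n))
    (U : (ℝ × EuclideanSpace ℝ (Fin n) × EuclideanSpace ℝ (Fin r)) × ℝ →
        EuclideanSpace ℝ (Fin r))
    (hT : ContDiff ℝ 2 T) (hX : ContDiff ℝ 2 X) (hU : ContDiff ℝ 2 U)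
    (hT0 : ∀ p : ℝ × EuclideanSpace ℝ (Fin n) × EuclideanSpace ℝ (Fin r), T (p, 0) = p.1)
    (hX0 : ∀ p : ℝ × EuclideanSpace ℝ (Fin n) × EuclideanSpace ℝ (Fin r), X (p, 0) = p.2.1)
    (hU0 : ∀ p : ℝ × EuclideanSpace ℝ (Fin n) × EuclideanSpace ℝ (Fin r), U (p, 0) = p.2.2)
    -- invariance of the cost (i)
    (hinvL : ∀ s ∈ Ioo (-ε) ε, ∀ t ∈ Icc a b,
      L (t, x t, u t) =
        L (T ((t, x t, u t), s), X ((t, x t, u t), s), U ((t, x t, u t), s)) *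
          deriv (fun τ => T ((τ, x τ, u τ), s)) t)
    -- invariance of the dynamics (ii)
    (hinvφ : ∀ s ∈ Ioo (-ε) ε, ∀ t ∈ Icc a b,
      deriv (fun τ => X ((τ, x τ, u τ), s)) t =
        (deriv (fun τ => T ((τ, x τ, u τ), s)) t) •
          φ (T ((t, x t, u t), s), X ((t, x t, u t), s), U ((t, x t, u t), s)))
    -- invariance of the constraints (iii)
    (hinvϕ : ∀ s ∈ Ioo (-ε) ε, ∀ t ∈ Icc a b,
      ϕ (t, x t, u t) =
        (deriv (fun τ => T ((τ, x τ, u τ), s)) t) •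
          ϕ (T ((t, x t, u t), s), X ((t, x t, u t), s), U ((t, x t, u t), s))) :
    -- conclusion: the Noether quantity is constant on [a,b]
    ∃ C : ℝ, ∀ t ∈ Icc a b,
      ⟪ψ t, deriv (fun s => X ((t, x t, u t), s)) 0⟫
        - Ham L φ ϕ t (x t) (u t) ψ₀ (ψ t) (lam t) *
            deriv (fun s => T ((t, x t, u t), s)) 0 = C := by
  obtain ⟨hdiff, -, hadj, hstat, hHt⟩ := hext
  have hs : Ioo (-ε) ε ∈ 𝓝 (0 : ℝ) := Ioo_mem_nhds (neg_neg_iff_pos.2 hε) hε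
  apply exists_forall_eq_of_hasDerivAt_zero
  intro t ht
  obtain ⟨hx, hu, hψ, hlam⟩ := hdiff t ht
  set q : ℝ × EuclideanSpace ℝ (Fin n) × EuclideanSpace ℝ (Fin r) := (t, x t, u t)
  have hp : HasDerivAt (fun τ => (τ, x τ, u τ)) ((1 : ℝ), deriv x t, deriv u t) t :=
    (hasDerivAt_id t).prodMk (hx.hasDerivAt.prodMk hu.hasDerivAt)
  have hγ : HasDerivAt (fun s => (T (q, s), X (q, s), U (q, s)))
      (deriv (fun s => T (q, s)) 0, deriv (fun s => X (q, s)) 0,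
        deriv (fun s => U (q, s)) 0) 0 := by
    have hTd := hT.differentiable two_ne_zero
    have hXd := hX.differentiable two_ne_zero
    have hUd := hU.differentiable two_ne_zero
    refine .prodMk ?_ (.prodMk ?_ ?_) <;> apply DifferentiableAt.hasDerivAt <;> fun_prop
  have hγ₀ : (T (q, 0), X (q, 0), U (q, 0)) = q := by simp only [hT0, hX0, hU0]
  have hc₀ : deriv (fun τ => T ((τ, x τ, u τ), 0)) t = 1 := by simp only [hT0, deriv_id'']
  have hc := hT.hasDerivAt_param_deriv hp 0
  have eL := eq_fderiv_add_smul_of_eventuallyEq_smul ((hL.differentiable one_ne_zero) q) hγ hγ₀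
    hc hc₀ (hasDerivAt_const 0 (L q))
    (eventually_of_mem hs fun s hs => (hinvL s hs t ht).trans (mul_comm _ _))
  have eφ := eq_fderiv_add_smul_of_eventuallyEq_smul ((hφ.differentiable one_ne_zero) q) hγ hγ₀
    hc hc₀ (hX.hasDerivAt_param_deriv hp 0)
    (eventually_of_mem hs fun s hs => hinvφ s hs t ht)
  have eϕ := eq_fderiv_add_smul_of_eventuallyEq_smul ((hϕ.differentiable one_ne_zero) q) hγ hγ₀
    hc hc₀ (hasDerivAt_const 0 (ϕ q)) (eventually_of_mem hs fun s hs => hinvϕ s hs t ht)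
  have hH := (differentiableAt_ham_comp (hL.differentiable one_ne_zero)
    (hφ.differentiable one_ne_zero) (hϕ.differentiable one_ne_zero) ψ₀ hx hu hψ hlam).hasDerivAt
  exact ((hψ.hasDerivAt.inner ℝ (hX.hasDerivAt_deriv_param hp 0)).sub
    (hH.mul (hT.hasDerivAt_deriv_param hp 0))).congr_deriv
    (noether_quantity_deriv_eq_zero eL eφ eϕ (hadj t ht _) (hstat t ht _) (hHt t ht))

/-- **Noether's invariance principle for constrained optimal control problems**
(Theorem 2). If the problem data `(L, φ, ϕ)` is invariant, along a Pontryagin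
extremal, under a `C²`-smooth one-parameter family of maps
`hˢ(t,x,u) = (T(t,x,u,s), X(t,x,u,s), U(t,x,u,s))` reducing to the identity at
`s = 0`, then `⟨ψ(t), ∂X/∂s|₀⟩ − H·∂T/∂s|₀` is constant on `[a,b]`. -/
theorem noether_invariance_constrained_optimal_control
    {n r m : ℕ}
    (L : ℝ × EuclideanSpace ℝ (Fin n) × EuclideanSpace ℝ (Fin r) → ℝ)
    (φ : ℝ × EuclideanSpace ℝ (Fin n) × EuclideanSpace ℝ (Fin r) → EuclideanSpace ℝ (Fin n))
    (ϕ : ℝ × EuclideanSpace ℝ (Fin n) × EuclideanSpace ℝ (Fin r) → EuclideanSpace ℝ (Fin m))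
    (hL : ContDiff ℝ 1 L) (hφ : ContDiff ℝ 1 φ) (hϕ : ContDiff ℝ 1 ϕ)
    (a b : ℝ) (hab : a < b)
    (x : ℝ → EuclideanSpace ℝ (Fin n)) (u : ℝ → EuclideanSpace ℝ (Fin r))
    (ψ₀ : ℝ) (ψ : ℝ → EuclideanSpace ℝ (Fin n)) (lam : ℝ → EuclideanSpace ℝ (Fin m))
    (hext : IsPontryaginExtremal L φ ϕ a b x u ψ₀ ψ lam)
    -- the C²-smooth one-parameter family of maps, identity at s = 0
    (ε : ℝ) (hε : 0 < ε)
    (T : (ℝ × EuclideanSpace ℝ (Fin n) × EuclideanSpace ℝ (Fin r)) × ℝ → ℝ)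
    (X : (ℝ × EuclideanSpace ℝ (Fin n) × EuclideanSpace ℝ (Fin r)) × ℝ →
        EuclideanSpace ℝ (Fin n))
    (U : (ℝ × EuclideanSpace ℝ (Fin n) × EuclideanSpace ℝ (Fin r)) × ℝ →
        EuclideanSpace ℝ (Fin r))
    (hT : ContDiff ℝ 2 T) (hX : ContDiff ℝ 2 X) (hU : ContDiff ℝ 2 U)
    (hT0 : ∀ p : ℝ × EuclideanSpace ℝ (Fin n) × EuclideanSpace ℝ (Fin r), T (p, 0) = p.1)
    (hX0 : ∀ p : ℝ × EuclideanSpace ℝ (Fin n) × EuclideanSpace ℝ (Fin r), X (p, 0) = p.2.1)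
    (hU0 : ∀ p : ℝ × EuclideanSpace ℝ (Fin n) × EuclideanSpace ℝ (Fin r), U (p, 0) = p.2.2)
    -- invariance of the cost (i)
    (hinvL : ∀ s ∈ Ioo (-ε) ε, ∀ t ∈ Icc a b,
      L (t, x t, u t) =
        L (T ((t, x t, u t), s), X ((t, x t, u t), s), U ((t, x t, u t), s)) *
          deriv (fun τ => T ((τ, x τ, u τ), s)) t)
    -- invariance of the dynamics (ii)
    (hinvφ : ∀ s ∈ Ioo (-ε) ε, ∀ t ∈ Icc a b,
      deriv (fun τ => X ((τ, x τ, u τ), s)) t =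
        (deriv (fun τ => T ((τ, x τ, u τ), s)) t) •
          φ (T ((t, x t, u t), s), X ((t, x t, u t), s), U ((t, x t, u t), s)))
    -- invariance of the constraints (iii)
    (hinvϕ : ∀ s ∈ Ioo (-ε) ε, ∀ t ∈ Icc a b,
      ϕ (t, x t, u t) =
        (deriv (fun τ => T ((τ, x τ, u τ), s)) t) •
          ϕ (T ((t, x t, u t), s), X ((t, x t, u t), s), U ((t, x t, u t), s))) :
    -- conclusion: the Noether quantity is constant on [a,b]
    ∃ C : ℝ, ∀ t ∈ Icc a b,
      ⟪ψ t, deriv (fun s => X ((t, x t, u t), s)) 0⟫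
        - Ham L φ ϕ t (x t) (u t) ψ₀ (ψ t) (lam t) *
            deriv (fun s => T ((t, x t, u t), s)) 0 = C :=
  noether_invariance_constrained_optimal_control_general L φ ϕ hL hφ hϕ a b x u ψ₀ ψ lam hext ε hε T
    X U hT hX hU hT0 hX0 hU0 hinvL hinvφ hinvϕ
end

section
/- Dynamics-invariance of the exhaustible-resource problem under the scaling family: Let x : [0,T] → ℝ and u₂ : [0,T] → ℝ be such that ẋ(t) = −u₂(t) for all t ∈ [0,T]. Then for all real s and all t ∈ [0,T], (d/dt)[e^{(1−βγ)s}·x(t)] = φ(e^{(αγ+1)s}·u₂(t)) · e^{−γ(α+β)s}, where φ(u₂) = −u₂; i.e. the transformed trajectory X(x(t),s) = e^{(1−βγ)s}·x(t) satisfies (d/dt) X(x(t),s) = φ(U₂(u₂(t),s)) · (d/dt) T(t,s). -/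
open Set Real

/-! The time rescaling `t ↦ e^{−γ(α+β)s} t` has constant speed, and the exponents of the scaling
family satisfy `(αγ + 1) − γ(α + β) = 1 − βγ`; so the rescaled dynamics is just the original
equation `ẋ = −u₂` multiplied by `e^{(1−βγ)s}`. -/

theorem exp_control_mul_exp_time_eq_exp_state (α β γ s : ℝ) :
    exp ((α * γ + 1) * s) * exp (-(γ * (α + β)) * s) = exp ((1 - β * γ) * s) := by
  rw [← exp_add]
  ring_nf

theorem HasDerivAt.const_mul_neg_of_mul_eq {x : ℝ → ℝ} {v a b c t : ℝ}
    (hx : HasDerivAt x (-v) t) (habc : a * b = c) :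
    HasDerivAt (fun τ => c * x τ) (-(a * v) * b) t := by
  refine (hx.const_mul c).congr_deriv ?_
  rw [← habc]
  ring

theorem exhaustible_resource_dynamics_invariance_general
    (α β γ : ℝ)
    (T : ℝ) (x u₂ : ℝ → ℝ)
    (hx : ∀ t ∈ Icc 0 T, HasDerivAt x (-(u₂ t)) t) :
    ∀ s : ℝ, ∀ t ∈ Icc 0 T,
      HasDerivAt (fun τ => Real.exp ((1 - β * γ) * s) * x τ)
        ((-(Real.exp ((α * γ + 1) * s) * u₂ t)) *
          deriv (fun τ : ℝ => Real.exp (-(γ * (α + β)) * s) * τ) t) t := by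
  intro s t ht
  rw [deriv_const_mul_id]
  exact (hx t ht).const_mul_neg_of_mul_eq (exp_control_mul_exp_time_eq_exp_state α β γ s)

/-- **Dynamics-invariance of the exhaustible-resource problem under the scaling
family**: if `ẋ(t) = −u₂(t)` on `[0,T]`, then the transformed trajectory
`X(x(t),s) = e^{(1−βγ)s}·x(t)` satisfies
`(d/dt)X(x(t),s) = φ(U₂(u₂(t),s)) · (d/dt)T(t,s)`, where `φ(u₂) = −u₂`,
`U₂(u₂,s) = e^{(αγ+1)s}·u₂` and `(d/dt)T(t,s) = e^{−γ(α+β)s}`. -/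
theorem exhaustible_resource_dynamics_invariance
    (α β γ : ℝ) (hγ : γ < 1) (hα : 0 < α) (hβ : 0 < β) (hαβ : α + β < 1)
    (T : ℝ) (x u₂ : ℝ → ℝ)
    (hx : ∀ t ∈ Icc 0 T, HasDerivAt x (-(u₂ t)) t) :
    ∀ s : ℝ, ∀ t ∈ Icc 0 T,
      HasDerivAt (fun τ => Real.exp ((1 - β * γ) * s) * x τ)
        ((-(Real.exp ((α * γ + 1) * s) * u₂ t)) *
          deriv (fun τ : ℝ => Real.exp (-(γ * (α + β)) * s) * τ) t) t :=
  exhaustible_resource_dynamics_invariance_general α β γ T x u₂ hx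
end

section
/- Conservation law for the exhaustible-resource problem (equation (13)): Let (x(·), u₁(·), u₂(·), ψ₀, ψ(·), λ(·)) satisfy on [0,T], with x(t), u₁(t), u₂(t) > 0, the Pontryagin conditions: ẋ(t) = −u₂(t); x(t)^{αγ}·u₂(t)^{βγ} − u₁(t)^γ = 0; ψ̇(t) = −∂H/∂x = −λ(t)·αγ·x(t)^{αγ−1}·u₂(t)^{βγ}; ∂H/∂u₁ = ψ₀·γ·u₁(t)^{γ−1} − λ(t)·γ·u₁(t)^{γ−1} = 0; ∂H/∂u₂ = −ψ(t) + λ(t)·βγ·x(t)^{αγ}·u₂(t)^{βγ−1} = 0; and (d/dt) H(x(t),u₁(t),u₂(t),ψ₀,ψ(t),λ(t)) = 0, where H(x,u₁,u₂,ψ₀,ψ,λ) = ψ₀·u₁^γ − ψ·u₂ + λ·(x^{αγ}·u₂^{βγ} − u₁^γ). Then, denoting by H̄ the (constant) value of the Hamiltonian along the extremal, the function t ↦ (1−βγ)·ψ(t)·x(t) + γ·(α+β)·H̄·t is constant on [0,T]. -/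
open Set Real

/-- The Hamiltonian of the exhaustible-resource problem:
`H(x,u₁,u₂,ψ₀,ψ,λ) = ψ₀·u₁^γ − ψ·u₂ + λ·(x^{αγ}·u₂^{βγ} − u₁^γ)`. -/
noncomputable def HamER (α β γ : ℝ) (x u₁ u₂ ψ₀ ψ lam : ℝ) : ℝ :=
  ψ₀ * u₁ ^ γ - ψ * u₂ + lam * (x ^ (α * γ) * u₂ ^ (β * γ) - u₁ ^ γ)

/-- **Conservation law for the exhaustible-resource problem** (equation (13)):
along any quintuple satisfying the Pontryagin conditions of the problem, with
`H̄` the constant value of the Hamiltonian, the function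
`t ↦ (1−βγ)·ψ(t)·x(t) + γ·(α+β)·H̄·t` is constant on `[0,T]`. -/
theorem exhaustible_resource_conservation_law
    (α β γ : ℝ) (hγ : γ < 1) (hα : 0 < α) (hβ : 0 < β) (hαβ : α + β < 1)
    (T : ℝ) (hT : 0 < T)
    (x u₁ u₂ : ℝ → ℝ) (ψ₀ : ℝ) (ψ lam : ℝ → ℝ)
    (hxpos : ∀ t ∈ Icc 0 T, 0 < x t)
    (hu₁pos : ∀ t ∈ Icc 0 T, 0 < u₁ t)
    (hu₂pos : ∀ t ∈ Icc 0 T, 0 < u₂ t)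
    -- control system ẋ(t) = −u₂(t)
    (hdyn : ∀ t ∈ Icc 0 T, HasDerivAt x (-(u₂ t)) t)
    -- equality constraint x^{αγ}·u₂^{βγ} − u₁^γ = 0
    (hconstr : ∀ t ∈ Icc 0 T,
      x t ^ (α * γ) * u₂ t ^ (β * γ) - u₁ t ^ γ = 0)
    -- adjoint equation ψ̇ = −∂H/∂x = −λ·αγ·x^{αγ−1}·u₂^{βγ}
    (hadj : ∀ t ∈ Icc 0 T,
      HasDerivAt ψ (-(lam t * (α * γ) * x t ^ (α * γ - 1) * u₂ t ^ (β * γ))) t)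
    -- stationarity ∂H/∂u₁ = ψ₀·γ·u₁^{γ−1} − λ·γ·u₁^{γ−1} = 0
    (hstat₁ : ∀ t ∈ Icc 0 T,
      ψ₀ * γ * u₁ t ^ (γ - 1) - lam t * γ * u₁ t ^ (γ - 1) = 0)
    -- stationarity ∂H/∂u₂ = −ψ + λ·βγ·x^{αγ}·u₂^{βγ−1} = 0
    (hstat₂ : ∀ t ∈ Icc 0 T,
      -ψ t + lam t * (β * γ) * x t ^ (α * γ) * u₂ t ^ (β * γ - 1) = 0)
    -- dH/dt = ∂H/∂t = 0 along the extremal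
    (hdH : ∀ t ∈ Icc 0 T,
      deriv (fun τ => HamER α β γ (x τ) (u₁ τ) (u₂ τ) ψ₀ (ψ τ) (lam τ)) t = 0) :
    ∃ Hbar : ℝ,
      (∀ t ∈ Icc 0 T, HamER α β γ (x t) (u₁ t) (u₂ t) ψ₀ (ψ t) (lam t) = Hbar) ∧
      ∃ C : ℝ, ∀ t ∈ Icc 0 T,
        (1 - β * γ) * ψ t * x t + γ * (α + β) * Hbar * t = C := by
  -- trivial case γ = 0
  by_cases hγ0 : γ = 0
  · subst hγ0
    have hψz : ∀ t ∈ Icc 0 T, ψ t = 0 := by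
      intro t ht
      have := hstat₂ t ht
      simpa using this
    refine ⟨ψ₀, fun t ht => ?_, 0, fun t ht => ?_⟩
    · simp [HamER, hψz t ht]
    · simp [hψz t ht]
  -- trivial case ψ₀ = 0
  have hu1ne : ∀ t ∈ Icc 0 T, γ * u₁ t ^ ((γ:ℝ) - 1) ≠ 0 := fun t ht =>
    mul_ne_zero hγ0 (Real.rpow_pos_of_pos (hu₁pos t ht) _).ne'
  have hlam : ∀ t ∈ Icc 0 T, lam t = ψ₀ := by
    intro t ht
    have h := hstat₁ t ht
    have h2 : lam t * (γ * u₁ t ^ ((γ:ℝ) - 1)) = ψ₀ * (γ * u₁ t ^ ((γ:ℝ) - 1)) := by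
      ring_nf
      ring_nf at h
      linarith
    exact mul_right_cancel₀ (hu1ne t ht) h2
  by_cases hψ0 : ψ₀ = 0
  · subst hψ0
    have hψz : ∀ t ∈ Icc 0 T, ψ t = 0 := by
      intro t ht
      have := hstat₂ t ht
      rw [hlam t ht] at this
      simpa using this
    refine ⟨0, fun t ht => ?_, 0, fun t ht => ?_⟩
    · simp [HamER, hψz t ht, hlam t ht]
    · simp [hψz t ht]
  -- main case
  have hβγ : β * γ < 1 := by
    rcases le_or_gt γ 0 with h | h
    · nlinarith
    · nlinarith
  have heβ : (β : ℝ) * γ - 1 ≠ 0 := by linarith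
  set c : ℝ := ψ₀ * (β * γ) with hc
  have hcne : c ≠ 0 := mul_ne_zero hψ0 (mul_ne_zero hβ.ne' hγ0)
  have hψeq : ∀ t ∈ Icc 0 T,
      ψ t = c * x t ^ (α * γ) * u₂ t ^ (β * γ - 1) := by
    intro t ht
    have h := hstat₂ t ht
    rw [hlam t ht] at h
    rw [hc]; linarith
  -- value of the Hamiltonian along the extremal
  have hHamval : ∀ t ∈ Icc 0 T,
      HamER α β γ (x t) (u₁ t) (u₂ t) ψ₀ (ψ t) (lam t)
        = ψ₀ * (1 - β * γ) * (x t ^ (α * γ) * u₂ t ^ (β * γ)) := by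
    intro t ht
    have hcon := hconstr t ht
    have hu2 : u₂ t ^ (β * γ - 1) * u₂ t = u₂ t ^ (β * γ) := by
      rw [← Real.rpow_add_one (hu₂pos t ht).ne' (β * γ - 1)]
      norm_num
    have hu1 : u₁ t ^ γ = x t ^ (α * γ) * u₂ t ^ (β * γ) := by linarith
    rw [HamER, hu1, hψeq t ht, hlam t ht, hc]
    linear_combination (-(ψ₀ * (β * γ)) * x t ^ (α * γ)) * hu2
  -- a differentiable function agreeing with the Hamiltonian on Icc 0 T
  set G : ℝ → ℝ := fun t =>
    ψ₀ * (1 - β * γ) *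
      (x t ^ (α * γ) * (ψ t / (c * x t ^ (α * γ))) ^ ((β * γ) / (β * γ - 1)))
    with hGdef
  have hvpos : ∀ t ∈ Icc 0 T, ψ t / (c * x t ^ (α * γ)) = u₂ t ^ (β * γ - 1) := by
    intro t ht
    have hne : c * x t ^ (α * γ) ≠ 0 :=
      mul_ne_zero hcne (Real.rpow_pos_of_pos (hxpos t ht) _).ne'
    rw [hψeq t ht, mul_div_cancel_left₀ _ hne]
  have hGeq : ∀ t ∈ Icc 0 T,
      G t = ψ₀ * (1 - β * γ) * (x t ^ (α * γ) * u₂ t ^ (β * γ)) := by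
    intro t ht
    rw [hGdef]
    simp only
    rw [hvpos t ht, ← Real.rpow_mul (hu₂pos t ht).le,
      show (β * γ - 1) * (β * γ / (β * γ - 1)) = β * γ by field_simp]
  have hGdiff : ∀ t ∈ Icc 0 T, DifferentiableAt ℝ G t := by
    intro t ht
    have hx := (hdyn t ht).differentiableAt
    have hψd := (hadj t ht).differentiableAt
    have hxne : x t ≠ 0 := (hxpos t ht).ne'
    have hA : DifferentiableAt ℝ (fun τ => x τ ^ (α * γ)) t :=
      hx.rpow_const (Or.inl hxne)
    have hden : DifferentiableAt ℝ (fun τ => c * x τ ^ (α * γ)) t :=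
      hA.const_mul c
    have hdenne : c * x t ^ (α * γ) ≠ 0 :=
      mul_ne_zero hcne (Real.rpow_pos_of_pos (hxpos t ht) _).ne'
    have hq : DifferentiableAt ℝ (fun τ => ψ τ / (c * x τ ^ (α * γ))) t :=
      hψd.div hden hdenne
    have hqne : ψ t / (c * x t ^ (α * γ)) ≠ 0 := by
      rw [hvpos t ht]
      exact (Real.rpow_pos_of_pos (hu₂pos t ht) _).ne'
    have hqp : DifferentiableAt ℝ
        (fun τ => (ψ τ / (c * x τ ^ (α * γ))) ^ ((β * γ) / (β * γ - 1))) t :=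
      hq.rpow_const (Or.inl hqne)
    exact ((hA.mul hqp).const_mul _)
  -- dG = 0 on the open interval
  have hG0 : ∀ t ∈ Ioo 0 T, HasDerivAt G 0 t := by
    intro t ht
    have htIcc : t ∈ Icc 0 T := Ioo_subset_Icc_self ht
    have hmem : Icc 0 T ∈ nhds t := Icc_mem_nhds ht.1 ht.2
    have hEE : (fun τ => HamER α β γ (x τ) (u₁ τ) (u₂ τ) ψ₀ (ψ τ) (lam τ)) =ᶠ[nhds t] G := by
      filter_upwards [hmem] with s hs
      rw [hHamval s hs, hGeq s hs]
    have hderivG : deriv G t = 0 := by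
      rw [← hEE.deriv_eq]
      exact hdH t htIcc
    have := (hGdiff t htIcc).hasDerivAt
    rwa [hderivG] at this
  -- G is constant on Icc 0 T
  have hGcont : ContinuousOn G (Icc 0 T) := fun t ht =>
    (hGdiff t ht).continuousAt.continuousWithinAt
  have hhalf : T / 2 ∈ Ioo (0:ℝ) T := ⟨by linarith, by linarith⟩
  set Hbar : ℝ := G (T / 2) with hHbar
  have hGIoo : EqOn G (fun _ => Hbar) (Ioo 0 T) := by
    intro t ht
    simp only
    rcases le_or_gt t (T / 2) with h | h
    · have key := constant_of_has_deriv_right_zero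
        (f := G) (a := t) (b := T / 2)
        (hGcont.mono (Icc_subset_Icc ht.1.le (by linarith)))
        (fun s hs => (hG0 s ⟨lt_of_lt_of_le ht.1 hs.1, hs.2.trans hhalf.2⟩).hasDerivWithinAt)
      exact (key (T / 2) ⟨h, le_refl _⟩).symm
    · have key := constant_of_has_deriv_right_zero
        (f := G) (a := T / 2) (b := t)
        (hGcont.mono (Icc_subset_Icc hhalf.1.le ht.2.le))
        (fun s hs => (hG0 s ⟨lt_of_lt_of_le hhalf.1 hs.1, hs.2.trans ht.2⟩).hasDerivWithinAt)
      exact key t ⟨h.le, le_refl _⟩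
  have hGIcc : EqOn G (fun _ => Hbar) (Icc 0 T) :=
    hGIoo.of_subset_closure hGcont continuousOn_const Ioo_subset_Icc_self
      (closure_Ioo hT.ne).symm.subset
  have hHam : ∀ t ∈ Icc 0 T,
      HamER α β γ (x t) (u₁ t) (u₂ t) ψ₀ (ψ t) (lam t) = Hbar := by
    intro t ht
    rw [hHamval t ht, ← hGeq t ht]
    exact hGIcc ht
  refine ⟨Hbar, hHam, ?_⟩
  -- the conserved quantity
  set F : ℝ → ℝ := fun t => (1 - β * γ) * ψ t * x t + γ * (α + β) * Hbar * t with hFdef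
  have hF0 : ∀ t ∈ Icc 0 T, HasDerivAt F 0 t := by
    intro t ht
    have h1 : HasDerivAt (fun τ => (1 - β * γ) * (ψ τ * x τ))
        ((1 - β * γ) * ((-(lam t * (α * γ) * x t ^ (α * γ - 1) * u₂ t ^ (β * γ))) * x t
          + ψ t * (-(u₂ t)))) t :=
      ((hadj t ht).mul (hdyn t ht)).const_mul _
    have h2 : HasDerivAt (fun τ => γ * (α + β) * Hbar * τ) (γ * (α + β) * Hbar) t := by
      simpa using (hasDerivAt_id t).const_mul (γ * (α + β) * Hbar)
    have h3 := h1.add h2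
    have hval : (1 - β * γ) * ((-(lam t * (α * γ) * x t ^ (α * γ - 1) * u₂ t ^ (β * γ))) * x t
          + ψ t * (-(u₂ t))) + γ * (α + β) * Hbar = 0 := by
      have hx1 : x t ^ (α * γ - 1) * x t = x t ^ (α * γ) := by
        rw [← Real.rpow_add_one (hxpos t ht).ne' (α * γ - 1)]
        norm_num
      have hu2 : u₂ t ^ (β * γ - 1) * u₂ t = u₂ t ^ (β * γ) := by
        rw [← Real.rpow_add_one (hu₂pos t ht).ne' (β * γ - 1)]
        norm_num
      have hHb : Hbar = ψ₀ * (1 - β * γ) * (x t ^ (α * γ) * u₂ t ^ (β * γ)) := by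
        rw [← hHam t ht, hHamval t ht]
      rw [hlam t ht, hψeq t ht, hHb, hc]
      linear_combination (-(1 - β * γ) * ψ₀ * (α * γ) * u₂ t ^ (β * γ)) * hx1 +
        (-(1 - β * γ) * ψ₀ * (β * γ) * x t ^ (α * γ)) * hu2
    have : HasDerivAt (fun τ => (1 - β * γ) * (ψ τ * x τ) + γ * (α + β) * Hbar * τ) 0 t := by
      rw [← hval]; exact h3
    have hfeq : F = fun τ => (1 - β * γ) * (ψ τ * x τ) + γ * (α + β) * Hbar * τ := by
      funext τ; rw [hFdef]; ring
    rw [hfeq]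
    exact this
  have hFcont : ContinuousOn F (Icc 0 T) := fun t ht =>
    (hF0 t ht).differentiableAt.continuousAt.continuousWithinAt
  have hFc := constant_of_has_deriv_right_zero (f := F) (a := 0) (b := T) hFcont
    (fun s hs => (hF0 s (Ico_subset_Icc_self hs)).hasDerivWithinAt)
  exact ⟨F 0, fun t ht => hFc t ht⟩
end
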